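/- arXiv:1911.08032 — 2 statements merged into one kernel-verified Lean document; each statement's English description precedes it below -/
import Mathlib

section
/- Suppose g, h ∈ G(F,F') are hyperbolic and translation compatible. Then: (i) the product gh is hyperbolic and is translation compatible with both g and h; (ii) ω_-(g) ≠ ω_+(h); (iii) g^{-1} and h^{-1} are translation compatible. -/
/-!
In a tree, a bi-infinite walk without backtracking is a geodesic line. Hence if `γ` is a reduced
segment from `x` to `f x` and `γ` followed by `f ∘ γ` does not backtrack at `f x`, the
`f`-translates of `γ` form an axis of `f`. For `f = g h` take for `γ` the segment `[x, g x]`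
followed by `g [x, h x]`. When the axes of `g` and `h` meet, `x` is a common vertex and translation
compatibility rules out backtracking; otherwise `x` is the end on `axis(h)` of a shortest bridge
from `axis(g)`, and `[x, g x]` runs down the bridge, along `axis(g)` and out along the translated
bridge. The new axis shares two consecutive vertices with each old axis, and two lines in a tree
sharing two consecutive vertices in the same order are translation compatible, because distances
along a line are distances in the tree. For (ii), one common vertex `pg (-n₀) = ph m₀` forces
every other one `pg (-n) = ph m` to have `n ≤ n₀` or `m ≤ m₀`.
-/

/-- `p : ℤ → V` is a translation axis for `g` with translation length `l ≥ 1`: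
`p` is an injective bi-infinite path, along which `g` translates by `l` steps.
This witnesses that `g` is hyperbolic with `axis(g) = p(ℤ)` and `l(g) = l`. -/
def IsTransAxis {V : Type*} (T : SimpleGraph V) (g : Equiv.Perm V) (p : ℤ → V) (l : ℕ) :
    Prop :=
  Function.Injective p ∧ (∀ i : ℤ, T.Adj (p i) (p (i + 1))) ∧ 1 ≤ l ∧
    ∀ i : ℤ, g (p i) = p (i + l)

/-- Two parametrized axes are translation compatible: on common vertices, the two
translation orders agree. -/
def TransCompat {V : Type*} (p q : ℤ → V) : Prop :=
  ∀ i j i' j' : ℤ, p i = q i' → p j = q j' → (i ≤ j ↔ i' ≤ j')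

section

variable {V : Type*} {T : SimpleGraph V}

namespace IsTransAxis

variable {g : Equiv.Perm V} {p : ℤ → V} {l : ℕ}

theorem injective (hp : IsTransAxis T g p l) : Function.Injective p := hp.1

theorem adj (hp : IsTransAxis T g p l) (i : ℤ) : T.Adj (p i) (p (i + 1)) := hp.2.1 i

theorem one_le (hp : IsTransAxis T g p l) : 1 ≤ l := hp.2.2.1

theorem apply (hp : IsTransAxis T g p l) (i : ℤ) : g (p i) = p (i + l) := hp.2.2.2 i

theorem inv_apply (hp : IsTransAxis T g p l) (i : ℤ) : g⁻¹ (p i) = p (i - l) := by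
  rw [Equiv.Perm.inv_eq_iff_eq, hp.apply, sub_add_cancel]

theorem inv (hp : IsTransAxis T g p l) : IsTransAxis T g⁻¹ (fun i => p (-i)) l := by
  refine ⟨hp.injective.comp neg_injective, fun i => ?_, hp.one_le, fun i => ?_⟩
  · simpa [sub_eq_add_neg, add_comm] using (hp.adj (-i - 1)).symm
  · simp only [hp.inv_apply, neg_add]
    rfl

end IsTransAxis

namespace TransCompat

variable {p q : ℤ → V}

theorem neg (h : TransCompat p q) : TransCompat (fun i => p (-i)) (fun i => q (-i)) :=
  fun i j i' j' hi hj => by simpa using h (-j) (-i) (-j') (-i') hj hi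

theorem finite_inter_range (h : TransCompat p q) :
    ((Set.range fun n : ℕ => p (-(n : ℤ))) ∩ Set.range fun n : ℕ => q (n : ℤ)).Finite := by
  rcases Set.eq_empty_or_nonempty
      ((Set.range fun n : ℕ => p (-(n : ℤ))) ∩ Set.range fun n : ℕ => q (n : ℤ))
    with hempty | ⟨_, ⟨n₀, rfl⟩, m₀, hm₀⟩
  · exact hempty ▸ Set.finite_empty
  refine (((Set.finite_Iic n₀).image fun n : ℕ => p (-(n : ℤ))).union
    ((Set.finite_Iic m₀).image fun m : ℕ => q (m : ℤ))).subset ?_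
  rintro _ ⟨⟨n, rfl⟩, m, hm⟩
  by_cases hn : n ≤ n₀
  · exact Or.inl ⟨n, hn, rfl⟩
  · have := (h _ _ _ _ hm.symm hm₀.symm).mp (by omega)
    exact Or.inr ⟨m, by simpa using this, hm⟩

end TransCompat

namespace SimpleGraph

def lineWalk (p : ℤ → V) (hadj : ∀ i, T.Adj (p i) (p (i + 1))) (i : ℤ) :
    (n : ℕ) → T.Walk (p i) (p (i + n))
  | 0 => Walk.nil.copy rfl (by simp)
  | n + 1 => (Walk.cons (hadj i) (lineWalk p hadj (i + 1) n)).copy rfl (by push_cast; ring_nf)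

variable {p : ℤ → V}

theorem lineWalk_length (hadj : ∀ i, T.Adj (p i) (p (i + 1))) (i : ℤ) (n : ℕ) :
    (lineWalk p hadj i n).length = n := by
  induction n generalizing i with
  | zero => simp [lineWalk]
  | succ n ih => simp [lineWalk, ih]

theorem lineWalk_getVert (hadj : ∀ i, T.Adj (p i) (p (i + 1))) (i : ℤ) {n r : ℕ} (hr : r ≤ n) :
    (lineWalk p hadj i n).getVert r = p (i + r) := by
  induction n generalizing i r with
  | zero => simp [lineWalk, Nat.le_zero.mp hr]
  | succ n ih =>
    cases r with
    | zero => simp [lineWalk]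
    | succ r =>
      simp only [lineWalk, Walk.getVert_copy, Walk.getVert_cons_succ, ih (i + 1) (by omega : r ≤ n)]
      push_cast; ring_nf

theorem IsAcyclic.isPath_lineWalk (hT : T.IsAcyclic) (hadj : ∀ i, T.Adj (p i) (p (i + 1)))
    (hnb : ∀ i, p (i + 2) ≠ p i) (n : ℕ) (i : ℤ) :
    (lineWalk p hadj i n).IsPath := by
  induction n using Nat.strong_induction_on generalizing i with
  | _ n ih =>
  match n with
  | 0 => simp [lineWalk]
  | n + 1 =>
    simp only [lineWalk, Walk.isPath_copy, Walk.cons_isPath_iff]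
    refine ⟨ih n (by omega) _, fun hmem => ?_⟩
    obtain ⟨r, hr, hrn⟩ := Walk.mem_support_iff_exists_getVert.mp hmem
    rw [lineWalk_length] at hrn
    rw [lineWalk_getVert hadj _ hrn] at hr
    -- two paths from `p (i + 1)` back to `p i`: the edge, and the walk of length `r`
    have hback := congrArg (fun w : T.Path _ _ => w.1.length)
      ((hT.subsingleton_path _ _).elim ⟨(lineWalk p hadj (i + 1) r).copy rfl hr,
        (Walk.isPath_copy _ _ _).2 (ih r (by omega) _)⟩ (Path.singleton (hadj i).symm))
    simp only [Walk.length_copy, lineWalk_length, Path.singleton, Walk.length_cons,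
      Walk.length_nil] at hback
    subst hback
    exact hnb i (by rw [← hr]; ring_nf)

theorem IsAcyclic.injective_of_nonbacktracking (hT : T.IsAcyclic)
    (hadj : ∀ i, T.Adj (p i) (p (i + 1))) (hnb : ∀ i, p (i + 2) ≠ p i) :
    Function.Injective p := by
  suffices h : ∀ i j, i ≤ j → p i = p j → i = j by
    intro i j he
    rcases le_total i j with hij | hji
    exacts [h i j hij he, (h j i hji he.symm).symm]
  intro i j hij he
  have hj : i + ((j - i).toNat : ℕ) = j := by omega
  have := (hT.isPath_lineWalk hadj hnb (j - i).toNat i).getVert_injOn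
    (by simp : 0 ∈ {k | k ≤ _}) (by simp [lineWalk_length] : (j - i).toNat ∈ {k | k ≤ _})
    (by rw [Walk.getVert_zero, lineWalk_getVert hadj _ le_rfl, hj, he])
  omega

theorem IsAcyclic.length_eq_dist_of_isPath (hT : T.IsAcyclic) {u v : V} {w : T.Walk u v}
    (hw : w.IsPath) : w.length = T.dist u v := by
  obtain ⟨w', hw'⟩ := w.reachable.exists_walk_length_eq_dist
  have := (hT.subsingleton_path u v).elim ⟨w, hw⟩ ⟨w', w'.isPath_of_length_eq_dist hw'⟩
  rw [← hw', show w = w' from congrArg Subtype.val this]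

theorem IsAcyclic.dist_eq_natAbs (hT : T.IsAcyclic) (hadj : ∀ i, T.Adj (p i) (p (i + 1)))
    (hinj : Function.Injective p) (i j : ℤ) :
    T.dist (p i) (p j) = (j - i).natAbs := by
  wlog hij : i ≤ j generalizing i j
  · rw [dist_comm, this j i (by omega)]
    omega
  have hnb : ∀ i, p (i + 2) ≠ p i := fun i he => by have := hinj he; omega
  have hj : i + ((j - i).toNat : ℕ) = j := by omega
  have hpath := (Walk.isPath_copy _ rfl (congrArg p hj)).2 (hT.isPath_lineWalk hadj hnb _ i)
  rw [← hT.length_eq_dist_of_isPath hpath, Walk.length_copy, lineWalk_length]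
  omega

theorem IsAcyclic.transCompat_of_eq_of_eq_add_one (hT : T.IsAcyclic)
    (hadj : ∀ i, T.Adj (p i) (p (i + 1))) (hinj : Function.Injective p)
    {q : ℤ → V} (hqadj : ∀ i, T.Adj (q i) (q (i + 1))) (hqinj : Function.Injective q) {a b : ℤ}
    (h₀ : p a = q b) (h₁ : p (a + 1) = q (b + 1)) : TransCompat p q := by
  have offset : ∀ i i', p i = q i' → i - a = i' - b := by
    intro i i' hi
    have e₀ := hT.dist_eq_natAbs hadj hinj a i
    have e₁ := hT.dist_eq_natAbs hadj hinj (a + 1) i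
    rw [h₀, hi, hT.dist_eq_natAbs hqadj hqinj] at e₀
    rw [h₁, hi, hT.dist_eq_natAbs hqadj hqinj] at e₁
    omega
  intro i j i' j' hi hj
  have := offset i i' hi
  have := offset j j' hj
  omega

/-- `γ` restricted to `[0, n]` is a walk in `T` without backtracking. -/
def IsReducedSeg (T : SimpleGraph V) (γ : ℤ → V) (n : ℤ) : Prop :=
  (∀ r, 0 ≤ r → r < n → T.Adj (γ r) (γ (r + 1))) ∧ ∀ r, 0 ≤ r → r + 2 ≤ n → γ (r + 2) ≠ γ r

/-- `σ` on `[0, a]` followed by `τ` on `[0, b]`, as a segment on `[0, a + b]`. -/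
def segAppend (σ : ℤ → V) (a : ℤ) (τ : ℤ → V) : ℤ → V := fun r => if r ≤ a then σ r else τ (r - a)

section segAppend

variable {σ τ : ℤ → V} {a r : ℤ}

theorem segAppend_of_le (hr : r ≤ a) : segAppend σ a τ r = σ r := if_pos hr

theorem segAppend_of_ge (h : σ a = τ 0) (hr : a ≤ r) : segAppend σ a τ r = τ (r - a) := by
  rcases hr.eq_or_lt with rfl | hr
  · rw [segAppend_of_le le_rfl, sub_self, h]
  · exact if_neg (not_le.mpr hr)

theorem IsReducedSeg.append {b : ℤ} (hσ : IsReducedSeg T σ a) (hτ : IsReducedSeg T τ b)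
    (h : σ a = τ 0) (hjoin : 0 < a → 0 < b → σ (a - 1) ≠ τ 1) :
    IsReducedSeg T (segAppend σ a τ) (a + b) := by
  constructor
  · intro r h0 hr
    rcases lt_or_ge r a with hra | hra
    · rw [segAppend_of_le hra.le, segAppend_of_le hra]
      exact hσ.1 r h0 hra
    · rw [segAppend_of_ge h hra, segAppend_of_ge h (by omega), add_sub_right_comm r 1 a]
      exact hτ.1 _ (by omega) (by omega)
  · intro r h0 hr
    by_cases hra : r + 2 ≤ a
    · rw [segAppend_of_le hra, segAppend_of_le (by omega)]
      exact hσ.2 r h0 hra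
    by_cases har : a ≤ r
    · rw [segAppend_of_ge h har, segAppend_of_ge h (by omega), add_sub_right_comm r 2 a]
      exact hτ.2 _ (by omega) (by omega)
    obtain rfl : r = a - 1 := by omega
    rw [segAppend_of_ge h (by omega), segAppend_of_le (by omega), show a - 1 + 2 - a = 1 by ring]
    exact (hjoin (by omega) (by omega)).symm

end segAppend

theorem IsReducedSeg.map {γ : ℤ → V} {n : ℤ} (hγ : IsReducedSeg T γ n) {f : Equiv.Perm V}
    (hf : ∀ u w, T.Adj u w ↔ T.Adj (f u) (f w)) : IsReducedSeg T (fun r => f (γ r)) n :=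
  ⟨fun r h0 hr => (hf _ _).mp (hγ.1 r h0 hr), fun r h0 hr => f.injective.ne (hγ.2 r h0 hr)⟩

theorem isReducedSeg_of_injective {p : ℤ → V} (hadj : ∀ i, T.Adj (p i) (p (i + 1)))
    (hinj : Function.Injective p) (a n : ℤ) : IsReducedSeg T (fun r => p (a + r)) n :=
  ⟨fun r _ _ => by simpa [add_assoc] using hadj (a + r),
    fun r _ _ he => by have := hinj he; omega⟩

theorem Walk.IsPath.isReducedSeg {u v : V} {w : T.Walk u v} (hw : w.IsPath) :
    IsReducedSeg T (fun r => w.getVert r.toNat) w.length := by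
  refine ⟨fun r h0 hr => ?_, fun r h0 hr he => ?_⟩
  · dsimp only
    rw [show (r + 1).toNat = r.toNat + 1 by omega]
    exact w.adj_getVert_succ (by omega)
  · have := hw.getVert_injOn (by simp only [Set.mem_ofPred_eq]; omega)
      (by simp only [Set.mem_ofPred_eq]; omega) he
    omega

/-- `hjunc` says that `γ` followed by `f ∘ γ` does not backtrack at `γ L`. -/
theorem IsAcyclic.exists_isTransAxis (hT : T.IsAcyclic) {f : Equiv.Perm V}
    (hf : ∀ u w, T.Adj u w ↔ T.Adj (f u) (f w)) {γ : ℤ → V} {L : ℕ} (hL : 1 ≤ L)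
    (hγ : IsReducedSeg T γ L) (hwrap : γ L = f (γ 0)) (hjunc : f (γ 1) ≠ γ (L - 1)) :
    ∃ p, IsTransAxis T f p L ∧ ∀ r : ℤ, 0 ≤ r → r ≤ L → p r = γ r := by
  have hL' : (0 : ℤ) < L := by omega
  set p : ℤ → V := fun i => (f ^ (i / L)) (γ (i % L))
  have hshift : ∀ i, p (i + L) = f (p i) := by
    intro i
    simp only [p, Int.add_emod_right, show (i + L) / L = 1 + i / L by
      rw [Int.add_ediv_of_dvd_right (dvd_refl _), Int.ediv_self hL'.ne', add_comm], zpow_add,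
      zpow_one, Equiv.Perm.mul_apply]
  have hbase : ∀ r : ℤ, 0 ≤ r → r ≤ L → p r = γ r := by
    intro r h0 hr
    rcases hr.lt_or_eq with hr | rfl
    · simp [p, Int.ediv_eq_zero_of_lt h0 hr, Int.emod_eq_of_lt h0 hr]
    · rw [← zero_add (L : ℤ), hshift, zero_add, hwrap]
      simp [p]
  have hperiodic : ∀ P : ℤ → Prop, (∀ i, P (i + L) ↔ P i) →
      (∀ r : ℤ, 0 ≤ r → r < L → P r) → ∀ i, P i := by
    intro P hP hPbase i
    obtain ⟨r, ⟨h0, hr⟩, hPr⟩ :=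
      Function.Periodic.exists_mem_Ico₀ (fun i => propext (hP i)) hL' i
    exact hPr ▸ hPbase r h0 hr
  have hadj : ∀ i, T.Adj (p i) (p (i + 1)) := hperiodic _
    (fun i => by rw [add_right_comm, hshift, hshift, ← hf])
    (fun r h0 hr => by rw [hbase r h0 hr.le, hbase (r + 1) (by omega) hr]; exact hγ.1 r h0 hr)
  have hnb : ∀ i, p (i + 2) ≠ p i := hperiodic _
    (fun i => by rw [add_right_comm, hshift, hshift, f.injective.ne_iff])
    (fun r h0 hr => by
      by_cases hr2 : r + 2 ≤ L
      · rw [hbase r h0 hr.le, hbase (r + 2) (by omega) hr2]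
        exact hγ.2 r h0 hr2
      · obtain rfl : r = L - 1 := by omega
        rw [show (L : ℤ) - 1 + 2 = 1 + L by ring, hshift, hbase 1 (by omega) (by omega),
          hbase _ h0 hr.le]
        exact hjunc)
  exact ⟨p, ⟨hT.injective_of_nonbacktracking hadj hnb, hadj, hL, fun i => (hshift i).symm⟩,
    hbase⟩

/-- With `x = σ 0 = τ 0`, `hend` and `hmid` say that the directions from `x` towards `g x` and
`h⁻¹ x` differ, and so do those towards `h x` and `g⁻¹ x`; then `σ` followed by `g ∘ τ` is a
fundamental domain of an axis of `g * h`. -/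
theorem IsAcyclic.exists_isTransAxis_mul (hT : T.IsAcyclic) {g h : Equiv.Perm V}
    (hg : ∀ u w, T.Adj u w ↔ T.Adj (g u) (g w)) (hh : ∀ u w, T.Adj u w ↔ T.Adj (h u) (h w))
    {σ τ : ℤ → V} {a b : ℕ} (ha : 1 ≤ a) (hb : 1 ≤ b)
    (hσ : IsReducedSeg T σ a) (hτ : IsReducedSeg T τ b) (hστ : σ 0 = τ 0)
    (hσa : σ a = g (σ 0)) (hτb : τ b = h (τ 0))
    (hmid : σ (a - 1) ≠ g (τ 1)) (hend : h (σ 1) ≠ τ (b - 1)) :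
    ∃ p, IsTransAxis T (g * h) p (a + b) ∧ (∀ r : ℤ, 0 ≤ r → r ≤ a → p r = σ r) ∧
      h (p (-1)) = τ (b - 1) := by
  have hjoin : σ a = g (τ 0) := hστ ▸ hσa
  obtain ⟨p, hp, hpγ⟩ := hT.exists_isTransAxis (f := g * h) (L := a + b)
    (γ := segAppend σ a fun r => g (τ r))
    (by rw [Equiv.Perm.coe_mul]; exact fun u w => (hh u w).trans (hg _ _)) (by omega)
    (by push_cast; exact hσ.append (hτ.map hg) hjoin fun _ _ => hmid)
    (by
      rw [segAppend_of_ge hjoin (by omega), segAppend_of_le (by omega), Nat.cast_add,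
        add_sub_cancel_left, hτb, hστ]
      rfl)
    (by
      rw [segAppend_of_le (by omega), segAppend_of_ge hjoin (by omega), Equiv.Perm.mul_apply,
        g.injective.ne_iff, Nat.cast_add, show (a : ℤ) + b - 1 - a = b - 1 by ring]
      exact hend)
  refine ⟨p, hp, fun r h0 hr => (hpγ r h0 (by omega)).trans (segAppend_of_le hr), ?_⟩
  have hlast := (hp.apply (-1)).trans (hpγ _ (by omega) (by omega))
  rw [segAppend_of_ge hjoin (by omega), Equiv.Perm.mul_apply,
    show -1 + ((a + b : ℕ) : ℤ) - a = b - 1 by push_cast; ring] at hlast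
  exact g.injective hlast

variable {g h : Equiv.Perm V} {pg ph : ℤ → V} {lg lh : ℕ}

theorem IsAcyclic.exists_isTransAxis_mul_of_eq (hT : T.IsAcyclic)
    (hg : ∀ u w, T.Adj u w ↔ T.Adj (g u) (g w)) (hh : ∀ u w, T.Adj u w ↔ T.Adj (h u) (h w))
    (hpg : IsTransAxis T g pg lg) (hph : IsTransAxis T h ph lh) (hcomp : TransCompat pg ph)
    {α β : ℤ} (hαβ : pg α = ph β) :
    ∃ p l, IsTransAxis T (g * h) p l ∧ TransCompat p pg ∧ TransCompat p ph := by
  obtain ⟨p, hp, hpσ, hpm⟩ := hT.exists_isTransAxis_mul hg hh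
    (σ := fun r => pg (α + r)) (τ := fun r => ph (β + r)) hpg.one_le hph.one_le
    (isReducedSeg_of_injective hpg.adj hpg.injective α lg)
    (isReducedSeg_of_injective hph.adj hph.injective β lh)
    (by simpa using hαβ) (by simp [hpg.apply]) (by simp [hph.apply])
    (fun he => by
      rw [show α + (lg - 1) = α - 1 + lg by ring, ← hpg.apply, g.injective.eq_iff] at he
      have := (hcomp _ _ _ _ he hαβ).mp (by omega)
      omega)
    (fun he => by
      rw [show β + (lh - 1) = β - 1 + lh by ring, ← hph.apply, h.injective.eq_iff] at he
      have := (hcomp _ _ _ _ hαβ he).mp (by omega)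
      omega)
  have h₀ : p 0 = pg α := by simpa using hpσ 0 le_rfl (by omega)
  have h₁ : p (0 + 1) = pg (α + 1) := hpσ 1 (by omega) (by have := hpg.one_le; omega)
  have hm : p (-1) = ph (β - 1) :=
    h.injective (hpm.trans (by rw [hph.apply]; ring_nf))
  exact ⟨p, _, hp, hT.transCompat_of_eq_of_eq_add_one hp.adj hp.injective hpg.adj hpg.injective
    h₀ h₁, hT.transCompat_of_eq_of_eq_add_one hp.adj hp.injective hph.adj hph.injective hm
    (by simpa [hαβ] using h₀)⟩

theorem Connected.exists_shortest_bridge (hconn : T.Connected) {ι κ : Type*} [Nonempty ι]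
    [Nonempty κ] (p : ι → V) (q : κ → V) (hpq : ∀ i j, p i ≠ q j) :
    ∃ i j, ∃ w : T.Walk (p i) (q j), w.IsPath ∧ 1 ≤ w.length ∧
      (∀ i', w.getVert 1 ≠ p i') ∧ ∀ j', w.getVert (w.length - 1) ≠ q j' := by
  set ij := Function.argmin fun x : ι × κ => T.dist (p x.1) (q x.2)
  have hmin : ∀ i' j', T.dist (p ij.1) (q ij.2) ≤ T.dist (p i') (q j') :=
    fun i' j' => Function.argmin_le (fun x : ι × κ => T.dist (p x.1) (q x.2)) (i', j')
  have hpos := hconn.pos_dist_of_ne (hpq ij.1 ij.2)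
  obtain ⟨w, hw, hwl⟩ := hconn.exists_path_of_dist (p ij.1) (q ij.2)
  refine ⟨ij.1, ij.2, w, hw, hwl ▸ hpos, fun i' he => ?_, fun j' he => ?_⟩
  · have := dist_le (w.drop 1)
    rw [Walk.drop_length, he] at this
    have := hmin i' ij.2
    omega
  · have := dist_le (w.take (w.length - 1))
    rw [Walk.take_length, he] at this
    have := hmin ij.1 j'
    omega

/-- If `w` leaves `axis(g)` at its first step, the segment `[x, g x]` runs back along `w`, along
`axis(g)`, and out along `g ∘ w`. -/
theorem _root_.IsTransAxis.exists_isReducedSeg_via_axis (hpg : IsTransAxis T g pg lg)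
    (hg : ∀ u w, T.Adj u w ↔ T.Adj (g u) (g w)) {α : ℤ} {x : V} {w : T.Walk (pg α) x}
    (hw : w.IsPath) (hk : 1 ≤ w.length) (hw₁ : ∀ i, w.getVert 1 ≠ pg i) :
    ∃ σ : ℤ → V, IsReducedSeg T σ (w.length + lg + w.length : ℕ) ∧ σ 0 = x ∧
      σ 1 = w.getVert (w.length - 1) ∧ σ w.length = pg α ∧ σ (w.length + 1) = pg (α + 1) ∧
      ∀ r : ℤ, w.length + lg ≤ r → σ r = g (w.getVert (r - (w.length + lg)).toNat) := by
  have hlg := hpg.one_le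
  set k := w.length
  set c : ℤ → V := fun r => w.getVert r.toNat
  set c' : ℤ → V := fun r => w.reverse.getVert r.toNat
  have hc' : ∀ r : ℤ, 0 ≤ r → r ≤ k → c' r = c (k - r) := fun r _ _ => by
    simp only [c', c, Walk.getVert_reverse]
    congr 1
    omega
  have hinner : c' k = pg (α + 0) := by simp [hc' k (by omega) le_rfl, c]
  have houter : segAppend c' k (fun r => pg (α + r)) (k + lg) = g (c 0) := by
    rw [segAppend_of_ge hinner (by omega), add_sub_cancel_left, ← hpg.apply]
    simp [c]
  have hc'seg : IsReducedSeg T c' k := by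
    have := hw.reverse.isReducedSeg
    rwa [Walk.length_reverse] at this
  refine ⟨segAppend (segAppend c' k fun r => pg (α + r)) (k + lg) fun r => g (c r), ?_, ?_, ?_,
    ?_, ?_, fun r hr => segAppend_of_ge houter hr⟩
  · push_cast
    refine (hc'seg.append (isReducedSeg_of_injective hpg.adj hpg.injective α lg) hinner
      fun _ _ => ?_).append (hw.isReducedSeg.map hg) houter fun _ _ => ?_
    · rw [hc' (k - 1) (by omega) (by omega), show (k : ℤ) - (k - 1) = 1 by ring]
      exact hw₁ _
    · rw [segAppend_of_ge hinner (by omega),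
        show α + ((k : ℤ) + lg - 1 - k) = α - 1 + lg by ring, ← hpg.apply, g.injective.ne_iff]
      exact (hw₁ _).symm
  · rw [segAppend_of_le (by omega), segAppend_of_le (by omega)]
    exact w.reverse.getVert_zero
  · rw [segAppend_of_le (by omega), segAppend_of_le (by omega), hc' 1 (by omega) (by omega),
      show (k : ℤ) - 1 = (k - 1 : ℕ) by omega]
    rfl
  · rw [segAppend_of_le (by omega), segAppend_of_le le_rfl, hinner, add_zero]
  · rw [segAppend_of_le (by omega), segAppend_of_ge hinner (by omega), add_sub_cancel_left]

theorem IsTree.exists_isTransAxis_mul_of_disjoint (hT : T.IsTree)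
    (hg : ∀ u w, T.Adj u w ↔ T.Adj (g u) (g w)) (hh : ∀ u w, T.Adj u w ↔ T.Adj (h u) (h w))
    (hpg : IsTransAxis T g pg lg) (hph : IsTransAxis T h ph lh) (hdisj : ∀ i j, pg i ≠ ph j) :
    ∃ p l, IsTransAxis T (g * h) p l ∧ TransCompat p pg ∧ TransCompat p ph := by
  obtain ⟨α, β, w, hw, hk, hw₁, hw₂⟩ := hT.connected.exists_shortest_bridge pg ph hdisj
  obtain ⟨σ, hσ, hσ₀, hσ₁, hσk, hσk₁, hσ_end⟩ := hpg.exists_isReducedSeg_via_axis hg hw hk hw₁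
  have hlg := hpg.one_le
  set k := w.length
  obtain ⟨p, hp, hpσ, hpm⟩ := hT.isAcyclic.exists_isTransAxis_mul hg hh
    (τ := fun r => ph (β + r)) (by omega : 1 ≤ k + lg + k) hph.one_le hσ
    (isReducedSeg_of_injective hph.adj hph.injective β lh) (by rw [hσ₀, add_zero])
    (by
      rw [hσ_end _ (by omega), hσ₀, show ((k + lg + k : ℕ) : ℤ) - (k + lg) = k by push_cast; ring]
      exact congrArg g w.getVert_length)
    (by simp [hph.apply])
    (by
      rw [hσ_end _ (by omega), g.injective.ne_iff,
        show ((k + lg + k : ℕ) : ℤ) - 1 - (k + lg) = (k - 1 : ℕ) by omega]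
      exact hw₂ _)
    (by
      rw [hσ₁, show β + ((lh : ℤ) - 1) = β - 1 + lh by ring, ← hph.apply, h.injective.ne_iff]
      exact hw₂ _)
  have hk₀ : p k = pg α := (hpσ k (by omega) (by omega)).trans hσk
  have hk₁ : p (k + 1) = pg (α + 1) := (hpσ (k + 1) (by omega) (by omega)).trans hσk₁
  have hm : p (-1) = ph (β - 1) := h.injective (hpm.trans (by rw [hph.apply]; ring_nf))
  have h₀ : p (-1 + 1) = ph (β - 1 + 1) := by
    rw [neg_add_cancel, sub_add_cancel, hpσ 0 le_rfl (by omega), hσ₀]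
  exact ⟨p, _, hp, hT.isAcyclic.transCompat_of_eq_of_eq_add_one hp.adj hp.injective hpg.adj
    hpg.injective hk₀ hk₁, hT.isAcyclic.transCompat_of_eq_of_eq_add_one hp.adj hp.injective
    hph.adj hph.injective hm h₀⟩

end SimpleGraph

end

/-- Suppose `g, h` are hyperbolic automorphisms of the tree `T` (with
axes `pg, ph` and translation lengths `lg, lh`) which are translation compatible.  Then:
(i) the product `g h` is hyperbolic and translation compatible with both `g` and `h`;
(ii) `ω₋(g) ≠ ω₊(h)`, i.e. the backward ray of `g` and the forward ray of `h` meet in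
only finitely many vertices; (iii) `g⁻¹` and `h⁻¹` (with the reversed axes) are
translation compatible. -/
theorem transCompat_facts {V : Type*} (T : SimpleGraph V) (hT : T.IsTree)
    (g h : Equiv.Perm V)
    (hg : ∀ u w : V, T.Adj u w ↔ T.Adj (g u) (g w))
    (hh : ∀ u w : V, T.Adj u w ↔ T.Adj (h u) (h w))
    (pg ph : ℤ → V) (lg lh : ℕ)
    (hpg : IsTransAxis T g pg lg) (hph : IsTransAxis T h ph lh)
    (hcomp : TransCompat pg ph) :
    (∃ p : ℤ → V, ∃ l : ℕ, IsTransAxis T (g * h) p l ∧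
      TransCompat p pg ∧ TransCompat p ph) ∧
    ((Set.range fun n : ℕ => pg (-(n : ℤ))) ∩ Set.range fun n : ℕ => ph (n : ℤ)).Finite ∧
    (IsTransAxis T g⁻¹ (fun i => pg (-i)) lg ∧ IsTransAxis T h⁻¹ (fun i => ph (-i)) lh ∧
      TransCompat (fun i => pg (-i)) (fun i => ph (-i))) := by
  refine ⟨?_, hcomp.finite_inter_range, hpg.inv, hph.inv, hcomp.neg⟩
  by_cases hmeet : ∃ α β, pg α = ph β
  · obtain ⟨α, β, hαβ⟩ := hmeet
    exact hT.isAcyclic.exists_isTransAxis_mul_of_eq hg hh hpg hph hcomp hαβ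
  · push Not at hmeet
    exact hT.exists_isTransAxis_mul_of_disjoint hg hh hpg hph hmeet
end

section
/- Let g ∈ G(F,F') be hyperbolic and v ∈ V(T). Then the sequence of cosets σ(g^n, g^{-n}(v))·F in Sym(Ω)/F is eventually constant; denote the limit λ_g(v). Moreover: (i) λ_g(v) = σ(g^k, g^{-k}(v)) · λ_g(g^{-k}(v)) for all k ≥ 0; (ii) if g^{-k}(v) ∉ S(g) for all k ≥ 1, then λ_g(g^n(v)) = σ(g^n, v)·F for all n ≥ 0; (iii) λ_g(v) = λ_{g^k}(v) for all k > 0. -/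
open Filter

namespace SimpleGraph

variable {V W : Type*} {G : SimpleGraph V}

theorem Reachable.dist_map_le {G' : SimpleGraph W} (f : G →g G') {u w : V}
    (h : G.Reachable u w) : G'.dist (f u) (f w) ≤ G.dist u w := by
  obtain ⟨p, hp⟩ := h.exists_walk_length_eq_dist
  simpa [hp] using dist_le (p.map f)

theorem IsTree.dist_eq_of_injective_chain (hG : G.IsTree) {q : ℕ → V}
    (hq : Function.Injective q) (hadj : ∀ j, G.Adj (q j) (q (j + 1))) (n : ℕ) :
    G.dist (q 0) (q n) = n := by
  set l := (List.range (n + 1)).map q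
  have hne : l ≠ [] := by simp [l]
  have hchain : l.IsChain G.Adj :=
    (List.isChain_map q).2 ((List.isChain_range_succ _ n).2 fun m _ => hadj m)
  have hpath : (Walk.ofSupport l hne hchain).IsPath := by
    rw [Walk.isPath_def, Walk.support_ofSupport]
    exact List.nodup_range.map hq
  have hends : l.head hne = q 0 ∧ l.getLast hne = q n := by simp [l, List.getLast_map]
  rw [← hends.1, ← hends.2]
  obtain ⟨p, hp, hplen⟩ := hG.connected.exists_path_of_dist (l.head hne) (l.getLast hne)
  rw [← hplen, (hG.existsUnique_path _ _).unique hp hpath]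
  simp [l]

def autSubgroup (G : SimpleGraph V) : Subgroup (Equiv.Perm V) where
  carrier := {h | ∀ u w, G.Adj u w ↔ G.Adj (h u) (h w)}
  mul_mem' ha hb u w := (hb u w).trans (ha _ _)
  one_mem' _ _ := Iff.rfl
  inv_mem' {h} hh u w := by simpa using (hh (h⁻¹ u) (h⁻¹ w)).symm

theorem Reachable.dist_apply_le {h : Equiv.Perm V} (hh : h ∈ G.autSubgroup) {u w : V}
    (huw : G.Reachable u w) : G.dist (h u) (h w) ≤ G.dist u w :=
  huw.dist_map_le ⟨h, (hh _ _).1⟩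

end SimpleGraph

theorem Equiv.Perm.injective_pow_apply {α : Type*} {f : Equiv.Perm α} {x : α}
    (hf : ∀ m ≠ 0, (f ^ m) x ≠ x) : Function.Injective fun n : ℕ => (f ^ n) x := by
  refine Function.Injective.of_lt_imp_ne fun n m hnm heq => hf (m - n) (by omega) ?_
  apply (f ^ n).injective
  simp only [← Equiv.Perm.mul_apply, ← pow_add, Nat.add_sub_cancel' hnm.le, heq]

namespace IsTransAxis

variable {V : Type*} {T : SimpleGraph V} {g : Equiv.Perm V} {p : ℤ → V} {l : ℕ}

theorem pow_apply (h : IsTransAxis T g p l) (j : ℕ) (i : ℤ) : (g ^ j) (p i) = p (i + j * l) := by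
  induction j generalizing i with
  | zero => simp
  | succ j ih =>
    rw [pow_succ, Equiv.Perm.mul_apply, h.2.2.2, ih]
    push_cast
    ring_nf

theorem dist_eq (h : IsTransAxis T g p l) (hT : T.IsTree) (n : ℕ) : T.dist (p 0) (p n) = n := by
  simpa using hT.dist_eq_of_injective_chain (q := fun j : ℕ => p j)
    (h.1.comp Nat.cast_injective) (fun j => by simpa using h.2.1 j) n

/-- The translation pushes `p 0` arbitrarily far, while an automorphism fixing `u` keeps it
within `dist u (p 0)` of `u`. -/
theorem pow_apply_ne_self (h : IsTransAxis T g p l) (hT : T.IsTree)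
    (hg : g ∈ T.autSubgroup) {m : ℕ} (hm : m ≠ 0) (u : V) : (g ^ m) u ≠ u := by
  intro hfix
  set a := T.dist u (p 0)
  set k := m * (2 * a + 1)
  have hfix' : (g ^ k) u = u := by
    rw [pow_mul]; exact Equiv.Perm.pow_apply_eq_self_of_apply_eq_self hfix _
  have hfar : T.dist (p 0) (p ↑(k * l)) = k * l := h.dist_eq hT _
  have hnear : T.dist u (p ↑(k * l)) ≤ a := by
    have := (hT.connected u (p 0)).dist_apply_le (pow_mem hg k)
    rwa [hfix', h.pow_apply, zero_add, ← Nat.cast_mul] at this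
  have hk : 2 * a + 1 ≤ k * l :=
    calc 2 * a + 1 ≤ k := Nat.le_mul_of_pos_left _ (Nat.pos_of_ne_zero hm)
      _ ≤ k * l := Nat.le_mul_of_pos_right _ h.2.2.1
  have := hT.connected.dist_triangle (u := p 0) (v := u) (w := p ↑(k * l))
  rw [SimpleGraph.dist_comm (u := p 0) (v := u)] at this
  omega

theorem eventually_inv_pow_apply_notMem (h : IsTransAxis T g p l) (hT : T.IsTree)
    (hg : g ∈ T.autSubgroup) {S : Set V} (hS : S.Finite) (u : V) :
    ∀ᶠ n in atTop, (g⁻¹ ^ n) u ∉ S := by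
  have hinj : Function.Injective fun n : ℕ => (g⁻¹ ^ n) u :=
    Equiv.Perm.injective_pow_apply fun m hm hfix => h.pow_apply_ne_self hT hg hm u <| by
      rwa [inv_pow, Equiv.Perm.inv_eq_iff_eq, eq_comm] at hfix
  rw [← Nat.cofinite_eq_atTop]
  exact hinj.tendsto_cofinite.eventually hS.eventually_cofinite_notMem

end IsTransAxis

section LocalAction

variable {V Ω : Type*}

def IsCocycleOn (σ : Equiv.Perm V → V → Equiv.Perm Ω) (H : Subgroup (Equiv.Perm V)) : Prop :=
  ∀ a ∈ H, ∀ b ∈ H, ∀ v, σ (a * b) v = σ a (b v) * σ b v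

/-- A local action is a cocycle because the colouring `c v` identifies the neighbours of `v`
with all of `Ω`. -/
theorem isCocycleOn_autSubgroup {T : SimpleGraph V} {c : V → V → Ω}
    (hc : ∀ v, Set.SurjOn (c v) (T.neighborSet v) Set.univ) {σ : Equiv.Perm V → V → Equiv.Perm Ω}
    (hσ : ∀ h ∈ T.autSubgroup, ∀ v u, T.Adj v u → σ h v (c v u) = c (h v) (h u)) :
    IsCocycleOn σ T.autSubgroup := by
  intro a ha b hb v
  ext ω
  obtain ⟨u, hu, rfl⟩ := hc v (Set.mem_univ ω)
  simp only [Equiv.Perm.mul_apply, hσ _ (mul_mem ha hb) v u hu, hσ b hb v u hu,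
    hσ a ha _ _ ((hb v u).1 hu)]

variable (σ : Equiv.Perm V → V → Equiv.Perm Ω) (F : Subgroup (Equiv.Perm Ω))

def cosetSeq (g : Equiv.Perm V) (u : V) (n : ℕ) : Equiv.Perm Ω ⧸ F :=
  QuotientGroup.mk (σ (g ^ n) ((g⁻¹ ^ n) u))

variable {σ F} {H : Subgroup (Equiv.Perm V)} {g : Equiv.Perm V}

theorem cosetSeq_add (hσ : IsCocycleOn σ H) (hg : g ∈ H) (u : V) (k n : ℕ) :
    cosetSeq σ F g u (k + n) = σ (g ^ k) ((g⁻¹ ^ k) u) • cosetSeq σ F g ((g⁻¹ ^ k) u) n := by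
  have harg : (g⁻¹ ^ (k + n)) u = (g⁻¹ ^ n) ((g⁻¹ ^ k) u) := by
    rw [add_comm, pow_add, Equiv.Perm.mul_apply]
  have hback : (g ^ n) ((g⁻¹ ^ n) ((g⁻¹ ^ k) u)) = (g⁻¹ ^ k) u := by
    rw [inv_pow]; exact Equiv.apply_symm_apply _ _
  rw [cosetSeq, cosetSeq, harg, pow_add, hσ _ (pow_mem hg k) _ (pow_mem hg n), hback]
  rfl

theorem cosetSeq_succ_of_mem (hσ : IsCocycleOn σ H) (hg : g ∈ H) {u : V} {n : ℕ}
    (hn : σ g ((g⁻¹ ^ (n + 1)) u) ∈ F) : cosetSeq σ F g u (n + 1) = cosetSeq σ F g u n := by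
  have harg : g ((g⁻¹ ^ (n + 1)) u) = (g⁻¹ ^ n) u := by
    rw [pow_succ', Equiv.Perm.mul_apply]
    exact g.apply_symm_apply _
  rw [cosetSeq, cosetSeq, pow_succ, hσ _ (pow_mem hg n) _ hg, harg,
    QuotientGroup.mk_mul_of_mem _ hn]

theorem cosetSeq_eq_of_forall_mem (hσ : IsCocycleOn σ H) (hg : g ∈ H) {u : V} {N : ℕ}
    (hN : ∀ m, N < m → σ g ((g⁻¹ ^ m) u) ∈ F) {n : ℕ} (hn : N ≤ n) :
    cosetSeq σ F g u n = cosetSeq σ F g u N := by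
  induction n, hn using Nat.le_induction with
  | base => rfl
  | succ n hn ih => rw [cosetSeq_succ_of_mem hσ hg (hN _ (by omega)), ih]

theorem exists_eventually_cosetSeq_eq (hσ : IsCocycleOn σ H) (hg : g ∈ H) {u : V}
    (hu : ∀ᶠ m in atTop, σ g ((g⁻¹ ^ m) u) ∈ F) :
    ∃ q, ∀ᶠ n in atTop, cosetSeq σ F g u n = q := by
  obtain ⟨N, hN⟩ := eventually_atTop.1 hu
  exact ⟨_, eventually_atTop.2 ⟨N, fun n => cosetSeq_eq_of_forall_mem hσ hg fun m hm => hN m hm.le⟩⟩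

theorem cosetSeq_pow_apply_of_forall_mem (hσ : IsCocycleOn σ H) (hg : g ∈ H) {u : V}
    (hu : ∀ k, 1 ≤ k → σ g ((g⁻¹ ^ k) u) ∈ F) {n m : ℕ} (hm : n ≤ m) :
    cosetSeq σ F g ((g ^ n) u) m = QuotientGroup.mk (σ (g ^ n) u) := by
  have hback : ∀ j, (g⁻¹ ^ (j + n)) ((g ^ n) u) = (g⁻¹ ^ j) u := fun j => by
    rw [pow_add, Equiv.Perm.mul_apply]
    simp
  refine (cosetSeq_eq_of_forall_mem hσ hg (fun k hk => ?_) hm).trans (by simp [cosetSeq])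
  rw [← Nat.sub_add_cancel hk.le, hback]
  exact hu _ (by omega)

theorem cosetSeq_pow (u : V) (k n : ℕ) : cosetSeq σ F (g ^ k) u n = cosetSeq σ F g u (k * n) := by
  simp only [cosetSeq, ← pow_mul, inv_pow]

end LocalAction

theorem lambda_exists_and_props_general {V Ω : Type*} (T : SimpleGraph V) (hT : T.IsTree)
    (c : V → V → Ω)
    (hbij : ∀ v : V, Set.BijOn (fun u => c v u) (T.neighborSet v) Set.univ)
    (σ : Equiv.Perm V → V → Equiv.Perm Ω)
    (hσ : ∀ g : Equiv.Perm V, (∀ u w : V, T.Adj u w ↔ T.Adj (g u) (g w)) →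
      ∀ v u : V, T.Adj v u → σ g v (c v u) = c (g v) (g u))
    (F : Subgroup (Equiv.Perm Ω))
    (g : Equiv.Perm V)
    (hg : ∀ u w : V, T.Adj u w ↔ T.Adj (g u) (g w))
    (hgfin : {v : V | σ g v ∉ F}.Finite)
    (pg : ℤ → V) (lg : ℕ) (hpg : IsTransAxis T g pg lg) :
    ∃ Λ : V → Equiv.Perm Ω ⧸ F,
      (∀ u : V, ∃ N : ℕ, ∀ n : ℕ, N ≤ n →
        (QuotientGroup.mk (σ (g ^ n) ((g⁻¹ ^ n) u)) : Equiv.Perm Ω ⧸ F) = Λ u) ∧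
      (∀ u : V, ∀ k : ℕ, Λ u = σ (g ^ k) ((g⁻¹ ^ k) u) • Λ ((g⁻¹ ^ k) u)) ∧
      (∀ u : V, (∀ k : ℕ, 1 ≤ k → σ g ((g⁻¹ ^ k) u) ∈ F) →
        ∀ n : ℕ, Λ ((g ^ n) u) = (QuotientGroup.mk (σ (g ^ n) u) : Equiv.Perm Ω ⧸ F)) ∧
      (∀ u : V, ∀ k : ℕ, 1 ≤ k → ∃ N : ℕ, ∀ n : ℕ, N ≤ n →
        (QuotientGroup.mk (σ ((g ^ k) ^ n) (((g ^ k)⁻¹ ^ n) u)) : Equiv.Perm Ω ⧸ F)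
          = Λ u) := by
  have hgA : g ∈ T.autSubgroup := hg
  have hσA : IsCocycleOn σ T.autSubgroup := isCocycleOn_autSubgroup (fun v => (hbij v).surjOn) hσ
  choose Λ hΛ using fun u => exists_eventually_cosetSeq_eq (F := F) hσA hgA <|
    (hpg.eventually_inv_pow_apply_notMem hT hgA hgfin u).mono fun _ => not_not.1
  refine ⟨Λ, fun u => eventually_atTop.1 (hΛ u), fun u k => ?_, fun u hu n => ?_, fun u k hk => ?_⟩
  · obtain ⟨n, hn, hn'⟩ :=
      (((tendsto_add_atTop_nat k).eventually (hΛ u)).and (hΛ ((g⁻¹ ^ k) u))).exists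
    rw [← hn, add_comm, cosetSeq_add hσA hgA, hn']
  · obtain ⟨m, hm, hnm⟩ := ((hΛ ((g ^ n) u)).and (eventually_ge_atTop n)).exists
    rw [← hm, cosetSeq_pow_apply_of_forall_mem hσA hgA hu hnm]
  · have := (tendsto_id.const_mul_atTop' (by omega : 0 < k)).eventually (hΛ u)
    simp only [id, ← cosetSeq_pow] at this
    exact eventually_atTop.1 this

/-- Let `g ∈ G(F,F')` be hyperbolic and `v ∈ V(T)`.  Then the sequence
of left cosets `σ(gⁿ, g⁻ⁿ(v))·F` in `Sym(Ω)/F` is eventually constant, with limit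
`λ_g(v)`, and:
(i) `λ_g(v) = σ(gᵏ, g⁻ᵏ(v)) • λ_g(g⁻ᵏ(v))` for all `k ≥ 0`;
(ii) if `g⁻ᵏ(v) ∉ S(g)` for all `k ≥ 1`, then `λ_g(gⁿ(v)) = σ(gⁿ, v)·F` for all `n ≥ 0`;
(iii) `λ_g(v) = λ_{gᵏ}(v)` for all `k > 0`. -/
theorem lambda_exists_and_props {V Ω : Type*} (T : SimpleGraph V) (hT : T.IsTree)
    (c : V → V → Ω)
    (hsym : ∀ u v : V, T.Adj u v → c u v = c v u)
    (hbij : ∀ v : V, Set.BijOn (fun u => c v u) (T.neighborSet v) Set.univ)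
    (σ : Equiv.Perm V → V → Equiv.Perm Ω)
    (hσ : ∀ g : Equiv.Perm V, (∀ u w : V, T.Adj u w ↔ T.Adj (g u) (g w)) →
      ∀ v u : V, T.Adj v u → σ g v (c v u) = c (g v) (g u))
    (F F' : Subgroup (Equiv.Perm Ω)) (hFF' : F ≤ F')
    (g : Equiv.Perm V)
    (hg : ∀ u w : V, T.Adj u w ↔ T.Adj (g u) (g w))
    (hgF' : ∀ v : V, σ g v ∈ F')
    (hgfin : {v : V | σ g v ∉ F}.Finite)
    (pg : ℤ → V) (lg : ℕ) (hpg : IsTransAxis T g pg lg) :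
    ∃ Λ : V → Equiv.Perm Ω ⧸ F,
      (∀ u : V, ∃ N : ℕ, ∀ n : ℕ, N ≤ n →
        (QuotientGroup.mk (σ (g ^ n) ((g⁻¹ ^ n) u)) : Equiv.Perm Ω ⧸ F) = Λ u) ∧
      (∀ u : V, ∀ k : ℕ, Λ u = σ (g ^ k) ((g⁻¹ ^ k) u) • Λ ((g⁻¹ ^ k) u)) ∧
      (∀ u : V, (∀ k : ℕ, 1 ≤ k → σ g ((g⁻¹ ^ k) u) ∈ F) →
        ∀ n : ℕ, Λ ((g ^ n) u) = (QuotientGroup.mk (σ (g ^ n) u) : Equiv.Perm Ω ⧸ F)) ∧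
      (∀ u : V, ∀ k : ℕ, 1 ≤ k → ∃ N : ℕ, ∀ n : ℕ, N ≤ n →
        (QuotientGroup.mk (σ ((g ^ k) ^ n) (((g ^ k)⁻¹ ^ n) u)) : Equiv.Perm Ω ⧸ F)
          = Λ u) :=
  lambda_exists_and_props_general T hT c hbij σ hσ F g hg hgfin pg lg hpg
end
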